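/- arXiv:2301.09202 — 2 statements merged into one kernel-verified Lean document; each statement's English description precedes it below -/
import Mathlib

section
/- Let N be a finite set, and for each j ∈ N let M_j : [0,∞) → ℝ satisfy M_j(t) ≥ M_j⁰ > 0, let ρ_j > 0, and let ω_j* ∈ ℝ. Suppose V : [0,∞) → ℝ is differentiable, nonnegative, and satisfies V̇(t) ≤ Σ_{j∈N} (Ṁ_j(t)/2 − ρ_j)(ω_j(t) − ω_j*)² where Ṁ_j(t) ≤ 2ρ_j − ε for some ε > 0 and all j, t. Then ∫_0^∞ Σ_{j∈N} (ω_j(t) − ω_j*)² dt ≤ (2/ε) V(0); in particular, if each ω_j is uniformly continuous, then ω_j(t) → ω_j* as t → ∞ for all j ∈ N. -/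
/-!
The margin `ε` turns the Lyapunov inequality into `V' ≤ -(ε / 2) · Σⱼ (ωⱼ - ωⱼ*)²` on `[0, ∞)`,
so `V` is nonincreasing and nonnegative there, and `∫₀^∞ -V' ≤ V(0)`; this bounds the integral of
the quadratic frequency deviation by `(2 / ε) V(0)`. Convergence is Barbalat's lemma: if a
uniformly continuous `f` stayed at distance `δ` from `0` at arbitrarily late times, then each
such time would start an interval of fixed length on which `‖f‖ ≥ δ / 2`, and these intervals
carry a fixed positive amount of `∫ ‖f‖ ^ p`, which is impossible since the tails of a finite
integral tend to zero.
-/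

open MeasureTheory Filter Set Topology ENNReal

theorem Finset.sum_mul_sq_le_mul_sum_sq {ι : Type*} (s : Finset ι) {c x : ι → ℝ} {b : ℝ}
    (hc : ∀ j ∈ s, c j ≤ b) : ∑ j ∈ s, c j * x j ^ 2 ≤ b * ∑ j ∈ s, x j ^ 2 := by
  rw [Finset.mul_sum]
  exact Finset.sum_le_sum fun j hj => mul_le_mul_of_nonneg_right (hc j hj) (sq_nonneg _)

theorem lintegral_Ioi_ofReal_neg_deriv_le {V : ℝ → ℝ} {a : ℝ} (hV : Differentiable ℝ V)
    (hV' : ∀ t ≥ a, deriv V t ≤ 0) (hV0 : ∀ t ≥ a, 0 ≤ V t) :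
    ∫⁻ t in Ioi a, ENNReal.ofReal (-deriv V t) ≤ ENNReal.ofReal (V a) := by
  have hanti : AntitoneOn V (Ici a) :=
    antitoneOn_of_deriv_nonpos (convex_Ici a) hV.continuous.continuousOn hV.differentiableOn
      fun t ht => hV' t (interior_subset ht)
  have himage : V '' Ici a ⊆ Icc 0 (V a) := by
    rintro _ ⟨t, ht, rfl⟩
    exact ⟨hV0 t ht, hanti self_mem_Ici ht ht⟩
  calc ∫⁻ t in Ioi a, ENNReal.ofReal (-deriv V t)
      ≤ ∫⁻ t in Ici a, ENNReal.ofReal (-deriv V t) := lintegral_mono_set Ioi_subset_Ici_self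
    _ = volume (V '' Ici a) :=
        lintegral_deriv_eq_volume_image_of_antitoneOn measurableSet_Ici
          (fun t _ => (hV t).hasDerivAt.hasDerivWithinAt) hanti
    _ ≤ volume (Icc 0 (V a)) := measure_mono himage
    _ = ENNReal.ofReal (V a) := by rw [Real.volume_Icc, sub_zero]

theorem tendsto_setLIntegral_Ioi_atTop_zero {μ : Measure ℝ} {g : ℝ → ℝ≥0∞} {a : ℝ}
    (hg : ∫⁻ t in Ioi a, g t ∂μ ≠ ∞) :
    Tendsto (fun b => ∫⁻ t in Ioi b, g t ∂μ) atTop (𝓝 0) := by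
  have hempty : ⋂ b : ℝ, Ioi b = ∅ :=
    eq_empty_of_forall_notMem fun x hx => lt_irrefl x (mem_iInter.1 hx x)
  have := tendsto_measure_iInter_atTop (μ := μ.withDensity g)
    (fun b => measurableSet_Ioi.nullMeasurableSet) (fun b c hbc => Ioi_subset_Ioi hbc)
    ⟨a, by rwa [withDensity_apply _ measurableSet_Ioi]⟩
  simpa only [hempty, measure_empty, Function.comp_def,
    withDensity_apply _ measurableSet_Ioi] using this

theorem tendsto_zero_of_uniformContinuous_of_lintegral_ne_top {E : Type*}
    [NormedAddCommGroup E] {f : ℝ → E} {p a : ℝ} (hp : 0 ≤ p) (hf : UniformContinuous f)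
    (hint : ∫⁻ t in Ioi a, ‖f t‖ₑ ^ p ≠ ∞) : Tendsto f atTop (𝓝 0) := by
  refine Metric.tendsto_atTop.2 fun δ hδ => ?_
  by_contra! hfar
  obtain ⟨η, hη, hfη⟩ := Metric.uniformContinuous_iff.1 hf (δ / 2) (half_pos hδ)
  set c := ENNReal.ofReal (δ / 2) ^ p * ENNReal.ofReal η
  have hc : 0 < c := by
    have : 0 < ENNReal.ofReal (δ / 2) := ENNReal.ofReal_pos.2 (half_pos hδ)
    exact ENNReal.mul_pos (ENNReal.rpow_pos this ofReal_ne_top).ne' (ENNReal.ofReal_pos.2 hη).ne'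
  have hbump : ∀ t, δ ≤ ‖f t‖ → c ≤ ∫⁻ s in Ioi t, ‖f s‖ₑ ^ p := by
    intro t ht
    have hnear : ∀ s ∈ Ioo t (t + η), ENNReal.ofReal (δ / 2) ^ p ≤ ‖f s‖ₑ ^ p := by
      intro s hs
      have hts : dist s t < η := by
        rw [Real.dist_eq, abs_of_pos (sub_pos.2 hs.1)]
        linarith [hs.2]
      have hdist := hfη hts
      rw [dist_eq_norm] at hdist
      rw [← ofReal_norm]
      gcongr
      linarith [norm_sub_norm_le (f t) (f s), norm_sub_rev (f s) (f t)]
    calc c = ∫⁻ _ in Ioo t (t + η), ENNReal.ofReal (δ / 2) ^ p := by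
          rw [setLIntegral_const, Real.volume_Ioo, add_sub_cancel_left]
      _ ≤ ∫⁻ s in Ioo t (t + η), ‖f s‖ₑ ^ p := setLIntegral_mono' measurableSet_Ioo hnear
      _ ≤ ∫⁻ s in Ioi t, ‖f s‖ₑ ^ p := lintegral_mono_set Ioo_subset_Ioi_self
  obtain ⟨b, hb⟩ := ((tendsto_setLIntegral_Ioi_atTop_zero hint).eventually (gt_mem_nhds hc)).exists
  obtain ⟨t, htb, ht⟩ := hfar b
  rw [dist_zero_right] at ht
  exact (hbump t ht).not_gt ((lintegral_mono_set (Ioi_subset_Ioi htb)).trans_lt hb)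

theorem stmt_9_general {N : Type*} [Fintype N]
    (M : N → ℝ → ℝ)
    (ρ : N → ℝ)
    (ωstar : N → ℝ) (ω : N → ℝ → ℝ)
    (V : ℝ → ℝ) (hVdiff : Differentiable ℝ V) (hVnonneg : ∀ t : ℝ, t ≥ 0 → 0 ≤ V t)
    (ε : ℝ) (hε : 0 < ε)
    (hMrate : ∀ j, ∀ t : ℝ, t ≥ 0 → deriv (M j) t ≤ 2 * ρ j - ε)
    (hVdot : ∀ t : ℝ, t ≥ 0 →
      deriv V t ≤ ∑ j, (deriv (M j) t / 2 - ρ j) * (ω j t - ωstar j) ^ 2) :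
    (∫⁻ t in Set.Ioi (0 : ℝ),
        ENNReal.ofReal (∑ j, (ω j t - ωstar j) ^ 2)
      ≤ ENNReal.ofReal ((2 / ε) * V 0)) ∧
    ((∀ j, UniformContinuous (ω j)) →
      ∀ j, Tendsto (ω j) atTop (nhds (ωstar j))) := by
  set S : ℝ → ℝ := fun t => ∑ j, (ω j t - ωstar j) ^ 2
  have hdecay : ∀ t ≥ 0, deriv V t ≤ -(ε / 2) * S t := fun t ht =>
    (hVdot t ht).trans <| Finset.sum_mul_sq_le_mul_sum_sq _ fun j _ => by
      linarith [hMrate j t ht]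
  have hS : ∀ t, 0 ≤ S t := fun t => Finset.sum_nonneg fun j _ => sq_nonneg _
  have hbound : ∫⁻ t in Ioi 0, ENNReal.ofReal (S t) ≤ ENNReal.ofReal (2 / ε * V 0) := calc
    ∫⁻ t in Ioi 0, ENNReal.ofReal (S t)
      ≤ ∫⁻ t in Ioi 0, ENNReal.ofReal (2 / ε) * ENNReal.ofReal (-deriv V t) := by
        refine setLIntegral_mono' measurableSet_Ioi fun t ht => ?_
        rw [← ENNReal.ofReal_mul (by positivity)]
        refine ENNReal.ofReal_le_ofReal ?_
        have := hdecay t ht.le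
        rw [div_mul_eq_mul_div, le_div_iff₀ hε]
        linarith
    _ = ENNReal.ofReal (2 / ε) * ∫⁻ t in Ioi 0, ENNReal.ofReal (-deriv V t) :=
        lintegral_const_mul' _ _ ofReal_ne_top
    _ ≤ ENNReal.ofReal (2 / ε) * ENNReal.ofReal (V 0) := by
        gcongr
        refine lintegral_Ioi_ofReal_neg_deriv_le hVdiff (fun t ht => ?_) hVnonneg
        nlinarith [hdecay t ht, hS t]
    _ = ENNReal.ofReal (2 / ε * V 0) := (ENNReal.ofReal_mul (by positivity)).symm
  refine ⟨hbound, fun huc j => tendsto_sub_nhds_zero_iff.1 <|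
    tendsto_zero_of_uniformContinuous_of_lintegral_ne_top zero_le_two
      ((huc j).sub uniformContinuous_const) (ne_top_of_le_ne_top ofReal_ne_top
        ((setLIntegral_mono' measurableSet_Ioi fun t _ => ?_).trans hbound))⟩
  rw [← ofReal_norm, ENNReal.ofReal_rpow_of_nonneg (norm_nonneg _) zero_le_two,
    Real.rpow_two, Real.norm_eq_abs, sq_abs]
  exact ENNReal.ofReal_le_ofReal
    (Finset.single_le_sum (fun i _ => sq_nonneg (ω i t - ωstar i)) (Finset.mem_univ j))

/-- Lyapunov derivative bound plus a strict rate margin `ε` yield an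
integrable quadratic frequency deviation, and (with uniform continuity) convergence
of each frequency to its equilibrium value. -/
theorem stmt_9 {N : Type*} [Fintype N]
    (M : N → ℝ → ℝ) (M0 : N → ℝ) (hM0 : ∀ j, 0 < M0 j)
    (hMlb : ∀ j, ∀ t : ℝ, t ≥ 0 → M j t ≥ M0 j)
    (hMdiff : ∀ j, Differentiable ℝ (M j))
    (ρ : N → ℝ) (hρ : ∀ j, 0 < ρ j)
    (ωstar : N → ℝ) (ω : N → ℝ → ℝ)
    (V : ℝ → ℝ) (hVdiff : Differentiable ℝ V) (hVnonneg : ∀ t : ℝ, t ≥ 0 → 0 ≤ V t)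
    (ε : ℝ) (hε : 0 < ε)
    (hMrate : ∀ j, ∀ t : ℝ, t ≥ 0 → deriv (M j) t ≤ 2 * ρ j - ε)
    (hVdot : ∀ t : ℝ, t ≥ 0 →
      deriv V t ≤ ∑ j, (deriv (M j) t / 2 - ρ j) * (ω j t - ωstar j) ^ 2) :
    (∫⁻ t in Set.Ioi (0 : ℝ),
        ENNReal.ofReal (∑ j, (ω j t - ωstar j) ^ 2)
      ≤ ENNReal.ofReal ((2 / ε) * V 0)) ∧
    ((∀ j, UniformContinuous (ω j)) →
      ∀ j, Tendsto (ω j) atTop (nhds (ωstar j))) :=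
  stmt_9_general M ρ ωstar ω V hVdiff hVnonneg ε hε hMrate hVdot
end

section
/- Consider two single-bus systems coupled only through shared frequency: τ ẋ = −x − K ω and M(t) ω̇ = −p^L + x − λω with τ, K, λ, p^L constants, τ, K, λ > 0, and M : [0,∞) → ℝ locally Lipschitz with M(t) ≥ M⁰ > 0 and Ṁ(t) ≤ 2λ − ε for some ε > 0 (a.e.). Then the equilibrium (x̄, ω̄) determined by ω̄ = −p^L/(K + λ) · (K+λ)/(K+λ) i.e. x̄ = −Kω̄, −p^L + x̄ − λω̄ = 0, is globally asymptotically stable: every solution satisfies (x(t), ω(t)) → (x̄, ω̄) as t → ∞. -/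
/-!
In the error coordinates `u = x - x̄`, `v = ω - ω̄` the function
`W = τ/(2K) u² + (M/2) v²` is absolutely continuous (as `M` is locally Lipschitz), and since the
cross terms `± u v` cancel, `Ẇ = -u²/K + (Ṁ/2 - λ) v² ≤ -(u²/K + (ε/2) v²) =: -q` almost
everywhere. Hence `W` is bounded, so `u`, `v` and their derivatives are bounded and `q` is
Lipschitz, while `∫₀^∞ q ≤ W 0`. Barbalat's lemma gives `q → 0`, hence `u, v → 0`.
-/

open Filter Set MeasureTheory Topology NNReal

theorem AbsolutelyContinuousOnInterval.sub_le_integral_of_ae_deriv_le {f g : ℝ → ℝ} {a b : ℝ}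
    (hab : a ≤ b) (hf : AbsolutelyContinuousOnInterval f a b)
    (hg : IntervalIntegrable g volume a b) (h : ∀ᵐ t, t ∈ Icc a b → deriv f t ≤ g t) :
    f b - f a ≤ ∫ t in a..b, g t := by
  rw [← hf.integral_deriv_eq_sub]
  exact intervalIntegral.integral_mono_ae_restrict hab hf.intervalIntegrable_deriv hg
    ((ae_restrict_iff' measurableSet_Icc).2 h)

theorem absolutelyContinuousOnInterval_of_hasDerivAt {f f' : ℝ → ℝ} {a b : ℝ}
    (hf : ∀ t ∈ uIcc a b, HasDerivAt f (f' t) t) (hf' : ContinuousOn f' (uIcc a b)) :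
    AbsolutelyContinuousOnInterval f a b := by
  obtain ⟨C, hC⟩ := isCompact_uIcc.exists_bound_of_continuousOn hf'
  refine LipschitzOnWith.absolutelyContinuousOnInterval (K := C.toNNReal) <|
    (convex_uIcc a b).lipschitzOnWith_of_nnnorm_hasDerivWithin_le
      (fun t ht => (hf t ht).hasDerivWithinAt) fun t ht => ?_
  rw [← NNReal.coe_le_coe, coe_nnnorm]
  exact (hC t ht).trans (Real.le_coe_toNNReal C)

theorem LocallyLipschitz.absolutelyContinuousOnInterval {f : ℝ → ℝ} (hf : LocallyLipschitz f)
    (a b : ℝ) : AbsolutelyContinuousOnInterval f a b :=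
  let ⟨_, hK⟩ := hf.locallyLipschitzOn.exists_lipschitzOnWith_of_compact isCompact_uIcc
  hK.absolutelyContinuousOnInterval

theorem tendsto_zero_of_sq_le_mul {α : Type*} {l : Filter α} {f g : α → ℝ} {c : ℝ}
    (hg : Tendsto g l (𝓝 0)) (hfg : ∀ᶠ x in l, f x ^ 2 ≤ c * g x) : Tendsto f l (𝓝 0) := by
  refine squeeze_zero_norm' (hfg.mono fun x hx => Real.abs_le_sqrt hx) ?_
  simpa using (hg.const_mul c).sqrt

theorem tendsto_integral_add_const_of_integral_le {q : ℝ → ℝ} {B : ℝ}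
    (hq : ContinuousOn q (Ici 0)) (hq0 : ∀ t, 0 ≤ t → 0 ≤ q t)
    (hB : ∀ T, 0 ≤ T → ∫ t in 0..T, q t ≤ B) (h : ℝ) :
    Tendsto (fun t => ∫ s in t..t + h, q s) atTop (𝓝 0) := by
  have hint : ∀ T, 0 ≤ T → IntervalIntegrable q volume 0 T := fun T hT =>
    (hq.mono fun s hs => by rw [uIcc_of_le hT] at hs; exact hs.1).intervalIntegrable
  have hIoi : IntegrableOn q (Ioi 0) := by
    refine integrableOn_Ioi_of_intervalIntegral_norm_bounded B 0
      (fun T => (hq.mono Icc_subset_Ici_self).integrableOn_Icc.mono_set Ioc_subset_Icc_self)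
      (b := fun T => T) tendsto_id ?_
    filter_upwards [eventually_ge_atTop 0] with T hT
    rw [intervalIntegral.integral_congr fun s hs =>
      Real.norm_of_nonneg (hq0 s (by rw [uIcc_of_le hT] at hs; exact hs.1))]
    exact hB T hT
  have hF := intervalIntegral_tendsto_integral_Ioi 0 hIoi (b := fun T => T) tendsto_id
  have hlim := (hF.comp (tendsto_atTop_add_const_right _ h tendsto_id)).sub hF
  rw [sub_self] at hlim
  refine hlim.congr' ?_
  filter_upwards [eventually_ge_atTop 0, eventually_ge_atTop (-h)] with t ht hth
  exact intervalIntegral.integral_interval_sub_left (hint (t + h) (by linarith)) (hint t ht)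

-- Barbalat's lemma.
theorem tendsto_zero_of_lipschitzOnWith_of_integral_le {q : ℝ → ℝ} {L : ℝ≥0} {B : ℝ}
    (hq : LipschitzOnWith L q (Ici 0)) (hq0 : ∀ t, 0 ≤ t → 0 ≤ q t)
    (hB : ∀ T, 0 ≤ T → ∫ t in 0..T, q t ≤ B) :
    Tendsto q atTop (𝓝 0) := by
  refine tendsto_order.2 ⟨fun a ha => ?_, fun δ hδ => ?_⟩
  · filter_upwards [eventually_ge_atTop 0] with t ht using ha.trans_le (hq0 t ht)
  set h := δ / (2 * (L + 1)) with hh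
  have hh0 : 0 < h := by positivity
  have hLh : L * h ≤ δ / 2 := by
    rw [hh, mul_div_assoc', div_le_div_iff₀ (by positivity) two_pos]
    nlinarith
  have hwin := tendsto_integral_add_const_of_integral_le hq.continuousOn hq0 hB h
  filter_upwards [eventually_ge_atTop 0,
    hwin.eventually (gt_mem_nhds (by positivity : 0 < δ / 2 * h))] with t ht hsmall
  by_contra! hqt
  have hlow : ∀ s ∈ Icc t (t + h), δ / 2 ≤ q s := by
    intro s hs
    have hd := hq.dist_le_mul s (le_trans ht hs.1) t ht
    have hst : dist s t ≤ h := by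
      rw [Real.dist_eq, abs_le]; constructor <;> linarith [hs.1, hs.2]
    have := mul_le_mul_of_nonneg_left hst L.coe_nonneg
    rw [Real.dist_eq] at hd
    linarith [neg_abs_le (q s - q t)]
  have := intervalIntegral.integral_mono_on (by linarith) (intervalIntegrable_const (μ := volume))
    ((hq.continuousOn.mono fun s hs => le_trans ht hs.1).intervalIntegrable_of_Icc (by linarith))
    hlow
  rw [intervalIntegral.integral_const, add_sub_cancel_left, smul_eq_mul] at this
  linarith

-- The single-bus system in the coordinates `(u, v) = (x - x̄, ω - ω̄)` centred at the equilibrium.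
structure IsErrorSolution (τ K lam : ℝ) (M u v : ℝ → ℝ) : Prop where
  hasDerivAt_fst : ∀ t, 0 ≤ t → HasDerivAt u ((-u t - K * v t) / τ) t
  hasDerivAt_snd : ∀ t, 0 ≤ t → HasDerivAt v ((u t - lam * v t) / M t) t

structure IsAdmissibleInertia (M0 c : ℝ) (M : ℝ → ℝ) : Prop where
  locallyLipschitz : LocallyLipschitz M
  bound_pos : 0 < M0
  bound_le : ∀ t, 0 ≤ t → M0 ≤ M t
  deriv_le : ∀ᵐ t, 0 ≤ t → deriv M t ≤ c

noncomputable section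

def lyapunov (τ K : ℝ) (M u v : ℝ → ℝ) (t : ℝ) : ℝ :=
  τ / (2 * K) * u t ^ 2 + M t / 2 * v t ^ 2

def dissipation (K ε : ℝ) (u v : ℝ → ℝ) (t : ℝ) : ℝ :=
  u t ^ 2 / K + ε / 2 * v t ^ 2

end

variable {τ K lam ε M0 c : ℝ} {M u v : ℝ → ℝ}

theorem IsAdmissibleInertia.pos (hM : IsAdmissibleInertia M0 c M) {t : ℝ} (ht : 0 ≤ t) :
    0 < M t :=
  hM.bound_pos.trans_le (hM.bound_le t ht)

theorem lyapunov_nonneg (hτ : 0 < τ) (hK : 0 < K) (hM : IsAdmissibleInertia M0 c M) {t : ℝ}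
    (ht : 0 ≤ t) : 0 ≤ lyapunov τ K M u v t := by
  have := hM.pos ht
  unfold lyapunov
  positivity

theorem dissipation_nonneg (hK : 0 < K) (hε : 0 ≤ ε) (t : ℝ) : 0 ≤ dissipation K ε u v t := by
  unfold dissipation
  positivity

theorem IsErrorSolution.continuousOn_dissipation (hs : IsErrorSolution τ K lam M u v) :
    ContinuousOn (dissipation K ε u v) (Ici 0) := fun t ht =>
  ((((hs.hasDerivAt_fst t ht).continuousAt.pow 2).div_const K).add
    (((hs.hasDerivAt_snd t ht).continuousAt.pow 2).const_mul _)).continuousWithinAt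

theorem hasDerivAt_lyapunov {t m : ℝ} (hτ : τ ≠ 0) (hK : K ≠ 0) (hMt : M t ≠ 0)
    (hu : HasDerivAt u ((-u t - K * v t) / τ) t) (hv : HasDerivAt v ((u t - lam * v t) / M t) t)
    (hM : HasDerivAt M m t) :
    HasDerivAt (lyapunov τ K M u v) (-(u t ^ 2 / K) + (m / 2 - lam) * v t ^ 2) t := by
  refine (((hu.pow 2).const_mul (τ / (2 * K))).add
    ((hM.div_const 2).mul (hv.pow 2))).congr_deriv ?_
  simp only [Pi.pow_apply]
  field_simp
  ring

theorem IsErrorSolution.absolutelyContinuousOnInterval_lyapunov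
    (hs : IsErrorSolution τ K lam M u v) (hM : IsAdmissibleInertia M0 c M) {a b : ℝ}
    (ha : 0 ≤ a) (hb : 0 ≤ b) : AbsolutelyContinuousOnInterval (lyapunov τ K M u v) a b := by
  have hsub : uIcc a b ⊆ Ici 0 := fun t ht => le_trans (le_min ha hb) ht.1
  have hcu : ContinuousOn u (Ici 0) := fun t ht =>
    (hs.hasDerivAt_fst t ht).continuousAt.continuousWithinAt
  have hcv : ContinuousOn v (Ici 0) := fun t ht =>
    (hs.hasDerivAt_snd t ht).continuousAt.continuousWithinAt
  have hu := absolutelyContinuousOnInterval_of_hasDerivAt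
    (fun t ht => hs.hasDerivAt_fst t (hsub ht))
    (((hcu.neg.sub (hcv.const_mul K)).div_const τ).mono hsub)
  have hv := absolutelyContinuousOnInterval_of_hasDerivAt
    (fun t ht => hs.hasDerivAt_snd t (hsub ht))
    (((hcu.sub (hcv.const_mul lam)).div hM.locallyLipschitz.continuous.continuousOn
      fun t ht => (hM.pos ht).ne').mono hsub)
  have hW : lyapunov τ K M u v =
      fun t => τ / (2 * K) * (u t * u t) + 1 / 2 * (M t * (v t * v t)) := by
    funext t
    simp only [lyapunov]
    ring
  rw [hW]
  exact ((hu.fun_mul hu).const_mul _).fun_add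
    (((hM.locallyLipschitz.absolutelyContinuousOnInterval a b).fun_mul (hv.fun_mul hv)).const_mul _)

theorem IsErrorSolution.lyapunov_add_integral_dissipation_le (hs : IsErrorSolution τ K lam M u v)
    (hM : IsAdmissibleInertia M0 (2 * lam - ε) M) (hτ : τ ≠ 0) (hK : K ≠ 0) {a b : ℝ}
    (ha : 0 ≤ a) (hab : a ≤ b) :
    lyapunov τ K M u v b + ∫ t in a..b, dissipation K ε u v t ≤ lyapunov τ K M u v a := by
  have hq : IntervalIntegrable (fun t => -dissipation K ε u v t) volume a b :=
    (hs.continuousOn_dissipation.mono fun t ht => ha.trans ht.1).neg.intervalIntegrable_of_Icc hab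
  have key := (hs.absolutelyContinuousOnInterval_lyapunov hM ha
    (ha.trans hab)).sub_le_integral_of_ae_deriv_le hab hq ?_
  · rw [intervalIntegral.integral_neg] at key
    linarith
  filter_upwards [(hM.locallyLipschitz.absolutelyContinuousOnInterval a b).ae_differentiableAt,
    hM.deriv_le] with t hMd hrate ht
  have ht0 : 0 ≤ t := ha.trans ht.1
  rw [(hasDerivAt_lyapunov hτ hK (hM.pos ht0).ne' (hs.hasDerivAt_fst t ht0)
    (hs.hasDerivAt_snd t ht0) (hMd (Icc_subset_uIcc ht)).hasDerivAt).deriv, dissipation]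
  nlinarith [hrate ht0, sq_nonneg (v t)]

theorem IsErrorSolution.exists_bound (hs : IsErrorSolution τ K lam M u v)
    (hM : IsAdmissibleInertia M0 (2 * lam - ε) M) (hτ : 0 < τ) (hK : 0 < K) (hε : 0 ≤ ε) :
    ∃ R, ∀ t, 0 ≤ t → |u t| ≤ R ∧ |v t| ≤ R := by
  set κ := min (τ / (2 * K)) (M0 / 2)
  have hκ : 0 < κ := lt_min (by positivity) (by linarith [hM.bound_pos])
  refine ⟨√(lyapunov τ K M u v 0 / κ), fun t ht => ?_⟩
  have hW : τ / (2 * K) * u t ^ 2 + M t / 2 * v t ^ 2 ≤ lyapunov τ K M u v 0 := by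
    have := hs.lyapunov_add_integral_dissipation_le hM hτ.ne' hK.ne' le_rfl ht
    have := intervalIntegral.integral_nonneg (μ := volume) ht
      fun s _ => dissipation_nonneg (u := u) (v := v) hK hε s
    exact (by linarith : lyapunov τ K M u v t ≤ _)
  have hMt := hM.bound_le t ht
  have hu2 : κ * u t ^ 2 ≤ τ / (2 * K) * u t ^ 2 := by gcongr; exact min_le_left _ _
  have hv2 : κ * v t ^ 2 ≤ M t / 2 * v t ^ 2 := by
    gcongr; exact (min_le_right _ _).trans (by linarith)
  have hu0 : 0 ≤ τ / (2 * K) * u t ^ 2 := by positivity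
  have hv0 : 0 ≤ M t / 2 * v t ^ 2 := by have := hM.pos ht; positivity
  constructor <;> refine Real.abs_le_sqrt ?_ <;> rw [le_div_iff₀ hκ] <;> linarith

theorem IsErrorSolution.exists_lipschitzOnWith_dissipation (hs : IsErrorSolution τ K lam M u v)
    (hM : IsAdmissibleInertia M0 c M) (hτ : 0 < τ) (hK : 0 < K) (hlam : 0 < lam) (hε : 0 ≤ ε)
    {R : ℝ} (hR : ∀ t, 0 ≤ t → |u t| ≤ R ∧ |v t| ≤ R) :
    ∃ L, LipschitzOnWith L (dissipation K ε u v) (Ici 0) := by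
  set C := 2 * R * ((1 + K) * R / τ) / K + ε * R * ((1 + lam) * R / M0)
  refine ⟨C.toNNReal, (convex_Ici 0).lipschitzOnWith_of_nnnorm_hasDerivWithin_le
    (f' := fun t => 2 * u t * ((-u t - K * v t) / τ) / K + ε * v t * ((u t - lam * v t) / M t))
    (fun t ht => ?_) fun t ht => ?_⟩
  · refine ((((hs.hasDerivAt_fst t ht).pow 2).div_const K).add
      (((hs.hasDerivAt_snd t ht).pow 2).const_mul (ε / 2))).hasDerivWithinAt.congr_deriv ?_
    ring
  obtain ⟨hut, hvt⟩ := hR t ht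
  have hR0 : 0 ≤ R := (abs_nonneg _).trans hut
  have hMt := hM.bound_le t ht
  have hM0 := hM.bound_pos
  have hdu : |(-u t - K * v t) / τ| ≤ (1 + K) * R / τ := by
    rw [abs_div, abs_of_pos hτ]
    gcongr
    calc |-u t - K * v t| ≤ |-u t| + |K * v t| := abs_sub _ _
      _ = |u t| + K * |v t| := by rw [abs_neg, abs_mul, abs_of_pos hK]
      _ ≤ (1 + K) * R := by nlinarith
  have hdv : |(u t - lam * v t) / M t| ≤ (1 + lam) * R / M0 := by
    rw [abs_div, abs_of_pos (hM.pos ht)]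
    gcongr
    calc |u t - lam * v t| ≤ |u t| + |lam * v t| := abs_sub _ _
      _ = |u t| + lam * |v t| := by rw [abs_mul, abs_of_pos hlam]
      _ ≤ (1 + lam) * R := by nlinarith
  rw [← NNReal.coe_le_coe, coe_nnnorm, Real.norm_eq_abs]
  refine (abs_add_le _ _).trans (le_trans ?_ (Real.le_coe_toNNReal C))
  rw [abs_div, abs_mul, abs_mul, abs_mul, abs_mul, abs_of_pos hK, abs_two, abs_of_nonneg hε]
  simp only [C]
  gcongr

theorem IsErrorSolution.tendsto_zero (hs : IsErrorSolution τ K lam M u v)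
    (hM : IsAdmissibleInertia M0 (2 * lam - ε) M) (hτ : 0 < τ) (hK : 0 < K) (hlam : 0 < lam)
    (hε : 0 < ε) : Tendsto u atTop (𝓝 0) ∧ Tendsto v atTop (𝓝 0) := by
  obtain ⟨R, hR⟩ := hs.exists_bound hM hτ hK hε.le
  obtain ⟨L, hL⟩ := hs.exists_lipschitzOnWith_dissipation hM hτ hK hlam hε.le hR
  have hq : Tendsto (dissipation K ε u v) atTop (𝓝 0) := by
    refine tendsto_zero_of_lipschitzOnWith_of_integral_le hL
      (fun t _ => dissipation_nonneg hK hε.le t) (B := lyapunov τ K M u v 0) fun T hT => ?_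
    have := hs.lyapunov_add_integral_dissipation_le hM hτ.ne' hK.ne' le_rfl hT
    linarith [lyapunov_nonneg hτ hK hM hT (u := u) (v := v)]
  refine ⟨tendsto_zero_of_sq_le_mul (c := K) hq (Eventually.of_forall fun t => ?_),
    tendsto_zero_of_sq_le_mul (c := 2 / ε) hq (Eventually.of_forall fun t => ?_)⟩
  · have : K * dissipation K ε u v t = u t ^ 2 + K * (ε / 2 * v t ^ 2) := by
      unfold dissipation; field_simp
    rw [this]
    have : 0 ≤ K * (ε / 2 * v t ^ 2) := by positivity
    linarith
  · have : 2 / ε * dissipation K ε u v t = 2 / ε * (u t ^ 2 / K) + v t ^ 2 := by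
      unfold dissipation; field_simp
    rw [this]
    have : 0 ≤ 2 / ε * (u t ^ 2 / K) := by positivity
    linarith

/-- Single-bus system `τ ẋ = −x − K ω`, `M(t) ω̇ = −p^L + x − λ ω`
with locally Lipschitz inertia `M(t) ≥ M⁰ > 0` satisfying `Ṁ ≤ 2λ − ε` a.e.:
every solution converges to the equilibrium `ω̄ = −p^L/(K + λ)`, `x̄ = −K ω̄`. -/
theorem stmt_18 (τ K lam pL M0 ε : ℝ)
    (hτ : 0 < τ) (hK : 0 < K) (hlam : 0 < lam) (hM0 : 0 < M0) (hε : 0 < ε)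
    (M : ℝ → ℝ) (hMlip : LocallyLipschitz M)
    (hMlb : ∀ t : ℝ, t ≥ 0 → M t ≥ M0)
    (hMrate : ∀ᵐ t : ℝ, t ≥ 0 → deriv M t ≤ 2 * lam - ε)
    (x ω : ℝ → ℝ)
    (hx : ∀ t : ℝ, t ≥ 0 → HasDerivAt x ((-(x t) - K * ω t) / τ) t)
    (hω : ∀ t : ℝ, t ≥ 0 → HasDerivAt ω ((-pL + x t - lam * ω t) / M t) t) :
    Tendsto x atTop (nhds (-K * (-pL / (K + lam)))) ∧
    Tendsto ω atTop (nhds (-pL / (K + lam))) := by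
  set ω₀ := -pL / (K + lam) with hω₀
  have hs : IsErrorSolution τ K lam M (fun t => x t - -K * ω₀) (fun t => ω t - ω₀) := by
    refine ⟨fun t ht => ((hx t ht).sub_const _).congr_deriv ?_,
      fun t ht => ((hω t ht).sub_const _).congr_deriv ?_⟩
    · ring
    · rw [hω₀]
      field_simp
      ring
  obtain ⟨hu, hv⟩ := hs.tendsto_zero ⟨hMlip, hM0, hMlb, hMrate⟩ hτ hK hlam hε
  exact ⟨by simpa using hu.add_const (-K * ω₀), by simpa using hv.add_const ω₀⟩
end
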